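/- Let n ≥ 3 and let i < j be such that {i, j} ⊆ {0,…,n} is broken. Then there exists a triangulation T of the (n+1)-gon with vertex set {0,…,n} in which both vertices i and j are extreme. -/

import Mathlib

open CategoryTheory Simplicial CategoryTheory.Limits

set_option linter.unusedVariables false

namespace Q2S

/-! ## Triangulations of the (n+1)-gon -/

/-- `(p, q)` is a chord of one of the triangles in `tris`. -/
def IsChord (tris : Finset (ℕ × ℕ × ℕ)) (p q : ℕ) : Prop :=
  ∃ t ∈ tris, (p, q) = (t.1, t.2.1) ∨ (p, q) = (t.2.1, t.2.2) ∨ (p, q) = (t.1, t.2.2)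

/-- A triangulation of the `(n+1)`-gon with vertices `0, …, n`: a set of `n - 1`
triples `a < b < c` of vertices whose chords are pairwise noncrossing. -/
structure Triangulation (n : ℕ) where
  tris : Finset (ℕ × ℕ × ℕ)
  card_eq : tris.card = n - 1
  lt₁ : ∀ t ∈ tris, t.1 < t.2.1
  lt₂ : ∀ t ∈ tris, t.2.1 < t.2.2
  le_n : ∀ t ∈ tris, t.2.2 ≤ n
  noncrossing : ∀ p q r s : ℕ, IsChord tris p q → IsChord tris r s →
    ¬(p < r ∧ r < q ∧ q < s)

/-- A vertex `i` is extreme in a triangulation of the `(n+1)`-gon. -/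
def Triangulation.IsExtreme {n : ℕ} (T : Triangulation n) (i : ℕ) : Prop :=
  (0 < i ∧ i < n ∧ (i - 1, i, i + 1) ∈ T.tris) ∨
  (i = 0 ∧ (0, 1, n) ∈ T.tris) ∨
  (i = n ∧ (0, n - 1, n) ∈ T.tris)

/-! ## Subcomplexes of the standard simplex -/

/-- The simplicial subset of `Δ[n]` cut out by a predicate on simplices which is closed
under the simplicial operators. -/
def simplexSub (n : ℕ) (P : ∀ ⦃m : SimplexCategoryᵒᵖ⦄, Δ[n].obj m → Prop)
    (hP : ∀ ⦃m m' : SimplexCategoryᵒᵖ⦄ (φ : m ⟶ m') (α : Δ[n].obj m), P α → P (Δ[n].map φ α)) :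
    SSet where
  obj m := { α : Δ[n].obj m // P α }
  map φ := TypeCat.ofHom fun x => ⟨Δ[n].map φ x.1, hP φ x.1 x.2⟩
  map_id m := by ext x; exact (congrArg (fun f => f x.1) (Δ[n].map_id m))
  map_comp φ ψ := by ext x; exact (congrArg (fun f => f x.1) (Δ[n].map_comp φ ψ))

/-- The inclusion of such a simplicial subset into `Δ[n]`. -/
def simplexSubIncl (n : ℕ) (P : ∀ ⦃m : SimplexCategoryᵒᵖ⦄, Δ[n].obj m → Prop)
    (hP : ∀ ⦃m m' : SimplexCategoryᵒᵖ⦄ (φ : m ⟶ m') (α : Δ[n].obj m), P α → P (Δ[n].map φ α)) :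
    simplexSub n P hP ⟶ Δ[n] where
  app m := TypeCat.ofHom fun x => x.1
  naturality _ _ _ := rfl

lemma genHorn_closed (n : ℕ) (S : Set (Fin (n + 1))) ⦃m m' : SimplexCategoryᵒᵖ⦄
    (φ : m ⟶ m') (α : Δ[n].obj m) (h : ∃ i ∈ S, ∀ k, SSet.stdSimplex.asOrderHom α k ≠ i) :
    ∃ i ∈ S, ∀ k, SSet.stdSimplex.asOrderHom (Δ[n].map φ α) k ≠ i := by
  obtain ⟨i, hiS, hi⟩ := h
  exact ⟨i, hiS, fun k => hi _⟩

/-- The generalized horn `Λ^S[n] ⊆ Δ[n]`: the union of the faces `dᵢ(Δ[n])` for `i ∈ S`.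
Its simplices are those maps `[m] → [n]` whose image misses some `i ∈ S`. -/
def genHorn (n : ℕ) (S : Set (Fin (n + 1))) : SSet :=
  simplexSub n (fun _ α => ∃ i ∈ S, ∀ k, SSet.stdSimplex.asOrderHom α k ≠ i) (genHorn_closed n S)

/-- The inclusion `Λ^S[n] ↪ Δ[n]` of a generalized horn. -/
def genHornIncl (n : ℕ) (S : Set (Fin (n + 1))) : genHorn n S ⟶ Δ[n] :=
  simplexSubIncl n _ _

/-! ## Broken subsets and 2-Segal horns -/

/-- A subset `S ⊆ {0, …, n}` is broken. -/
def BrokenSet {n : ℕ} (S : Set (Fin (n + 1))) : Prop :=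
  ∃ a b c d : Fin (n + 1), a < b ∧ b < c ∧ c < d ∧
    ((a ∈ S ∧ c ∈ S ∧ b ∉ S ∧ d ∉ S) ∨ (b ∈ S ∧ d ∈ S ∧ a ∉ S ∧ c ∉ S))

/-- The pair `{i, j}` with `i < j` is broken in `{0, …, n}`:
`i < j - 1` and not (`i = 0` and `j = n`). -/
def PairBroken {n : ℕ} (i j : Fin (n + 1)) : Prop :=
  (i : ℕ) + 1 < (j : ℕ) ∧ ¬((i : ℕ) = 0 ∧ (j : ℕ) = n)

/-- The 2-Segal horn `Λ^{i,j}[n]`: the union of all faces of `Δ[n]` except `dᵢ` and `dⱼ`. -/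
def twoSegalHorn (n : ℕ) (i j : Fin (n + 1)) : SSet :=
  genHorn n ({i, j}ᶜ)

/-- The inclusion of the 2-Segal horn `Λ^{i,j}[n] ↪ Δ[n]`. -/
def twoSegalHornIncl (n : ℕ) (i j : Fin (n + 1)) : twoSegalHorn n i j ⟶ Δ[n] :=
  genHornIncl n _

/-- A simplicial set is a quasi-2-Segal set if it has fillers for all 2-Segal horns. -/
def IsQuasiTwoSegal (X : SSet) : Prop :=
  ∀ (n : ℕ) (i j : Fin (n + 1)), 3 ≤ n → PairBroken i j →
    ∀ f : twoSegalHorn n i j ⟶ X, ∃ g : Δ[n] ⟶ X, twoSegalHornIncl n i j ≫ g = f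

/-! ## 2-Segal spines -/

lemma spine_closed {n : ℕ} (T : Triangulation n) ⦃m m' : SimplexCategoryᵒᵖ⦄
    (φ : m ⟶ m') (α : Δ[n].obj m)
    (h : ∃ t ∈ T.tris, ∀ k, (SSet.stdSimplex.asOrderHom α k : ℕ) = t.1 ∨
      (SSet.stdSimplex.asOrderHom α k : ℕ) = t.2.1 ∨ (SSet.stdSimplex.asOrderHom α k : ℕ) = t.2.2) :
    ∃ t ∈ T.tris, ∀ k, (SSet.stdSimplex.asOrderHom (Δ[n].map φ α) k : ℕ) = t.1 ∨
      (SSet.stdSimplex.asOrderHom (Δ[n].map φ α) k : ℕ) = t.2.1 ∨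
      (SSet.stdSimplex.asOrderHom (Δ[n].map φ α) k : ℕ) = t.2.2 := by
  obtain ⟨t, htT, ht⟩ := h
  exact ⟨t, htT, fun k => ht _⟩

/-- The 2-Segal spine associated to a triangulation `T` of the `(n+1)`-gon:
the union of the 2-dimensional faces of `Δ[n]` indexed by the triangles of `T`. -/
def twoSegalSpine (n : ℕ) (T : Triangulation n) : SSet :=
  simplexSub n
    (fun _ α => ∃ t ∈ T.tris, ∀ k, (SSet.stdSimplex.asOrderHom α k : ℕ) = t.1 ∨
      (SSet.stdSimplex.asOrderHom α k : ℕ) = t.2.1 ∨ (SSet.stdSimplex.asOrderHom α k : ℕ) = t.2.2)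
    (spine_closed T)

/-- The 2-Segal spine inclusion. -/
def twoSegalSpineIncl (n : ℕ) (T : Triangulation n) : twoSegalSpine n T ⟶ Δ[n] :=
  simplexSubIncl n _ _

end Q2S

namespace Q2Saux

/-- Chords allowed in our explicit triangulations: boundary edges, the edge `{0, n}`,
fan chords from the center `c` avoiding the ear set `E`, and ear diagonals. -/
def Good (n c : ℕ) (E : Set ℕ) (p q : ℕ) : Prop :=
  q = p + 1 ∨ (p = 0 ∧ q = n) ∨ (p = c ∧ q ∉ E) ∨ (p + 1 ∈ E ∧ q = p + 2)

lemma goodCross {n c : ℕ} {E : Set ℕ} (hEc : ∀ x ∈ E, x ≠ c)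
    (hEE : ∀ x ∈ E, ∀ y ∈ E, y ≠ x + 1) {p q r s : ℕ} (hq : q ≤ n) (hs : s ≤ n)
    (h1 : Good n c E p q) (h2 : Good n c E r s) : ¬(p < r ∧ r < q ∧ q < s) := by
  rintro ⟨h3, h4, h5⟩
  rcases h1 with h1 | ⟨ha, hb⟩ | ⟨ha, hb⟩ | ⟨ha, hb⟩ <;>
    rcases h2 with h2 | ⟨hc, hd⟩ | ⟨hc, hd⟩ | ⟨hc, hd⟩ <;> try omega
  · refine hb ?_
    have hq' : q = r + 1 := by omega
    rw [hq']; exact hc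
  · exact hEc (p + 1) ha (by omega)
  · exact absurd (show r + 1 = (p + 1) + 1 by omega) (hEE (p + 1) ha (r + 1) hc)

lemma mkNoncross {n : ℕ} (c : ℕ) (E : Set ℕ) (tris : Finset (ℕ × ℕ × ℕ))
    (hlt2 : ∀ t ∈ tris, t.2.1 < t.2.2) (hle : ∀ t ∈ tris, t.2.2 ≤ n)
    (hEc : ∀ x ∈ E, x ≠ c) (hEE : ∀ x ∈ E, ∀ y ∈ E, y ≠ x + 1)
    (hG : ∀ t ∈ tris, Good n c E t.1 t.2.1 ∧ Good n c E t.2.1 t.2.2 ∧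
      Good n c E t.1 t.2.2) :
    ∀ p q r s : ℕ, Q2S.IsChord tris p q → Q2S.IsChord tris r s →
      ¬(p < r ∧ r < q ∧ q < s) := by
  have key : ∀ p q, Q2S.IsChord tris p q → Good n c E p q ∧ q ≤ n := by
    rintro p q ⟨t, ht, h | h | h⟩ <;> rw [Prod.mk.injEq] at h <;> obtain ⟨rfl, rfl⟩ := h
    · exact ⟨(hG t ht).1, le_trans (le_of_lt (hlt2 t ht)) (hle t ht)⟩
    · exact ⟨(hG t ht).2.1, hle t ht⟩
    · exact ⟨(hG t ht).2.2, hle t ht⟩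
  intro p q r s h1 h2
  exact goodCross hEc hEE (key p q h1).2 (key r s h2).2 (key p q h1).1 (key r s h2).1

/-- A fan of triangles from center `c`, together with two extra triangles. -/
def fanT (c : ℕ) (K : Finset ℕ) (sf : ℕ → ℕ) (X Y : ℕ × ℕ × ℕ) : Finset (ℕ × ℕ × ℕ) :=
  insert X (insert Y (K.image fun k => (c, k, sf k)))

lemma fanT_mem {c : ℕ} {K : Finset ℕ} {sf : ℕ → ℕ} {X Y t : ℕ × ℕ × ℕ} :
    t ∈ fanT c K sf X Y ↔ t = X ∨ t = Y ∨ ∃ k ∈ K, (c, k, sf k) = t := by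
  simp [fanT]

lemma fanT_card {c : ℕ} {K : Finset ℕ} {sf : ℕ → ℕ} {X Y : ℕ × ℕ × ℕ}
    (h1 : X.2.1 ≠ Y.2.1) (h2 : X.2.1 ∉ K) (h3 : Y.2.1 ∉ K) :
    (fanT c K sf X Y).card = K.card + 2 := by
  have hinj : Function.Injective fun k => (c, k, sf k) := by
    intro a b h
    exact congrArg (fun t => t.2.1) h
  have hY : Y ∉ K.image fun k => (c, k, sf k) := by
    simp only [Finset.mem_image]
    rintro ⟨k, hk, rfl⟩
    exact h3 hk
  have hX : X ∉ insert Y (K.image fun k => (c, k, sf k)) := by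
    simp only [Finset.mem_insert, Finset.mem_image]
    rintro (rfl | ⟨k, hk, rfl⟩)
    · exact h1 rfl
    · exact h2 hk
  rw [fanT, Finset.card_insert_of_notMem hX, Finset.card_insert_of_notMem hY,
    Finset.card_image_of_injective _ hinj]

end Q2Saux

/-- For `n ≥ 3` and a broken pair `i < j` in `{0, …, n}`, there is a
triangulation of the `(n+1)`-gon in which both `i` and `j` are extreme. -/
theorem exists_triangulation_extreme_pair (n i j : ℕ) (hn : 3 ≤ n) (hij : i < j) (hjn : j ≤ n)
    (hbroken : i + 1 < j ∧ ¬(i = 0 ∧ j = n)) :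
    ∃ T : Q2S.Triangulation n, T.IsExtreme i ∧ T.IsExtreme j := by
  obtain ⟨hb1, hb2⟩ := hbroken
  by_cases hi0 : i = 0
  · -- Case B: `i = 0`, hence `2 ≤ j < n`.  Ears `(0,1,n)` and `(j-1,j,j+1)`, fan from `1`.
    subst hi0
    have hj2 : 2 ≤ j := by omega
    have hjn' : j < n := lt_of_le_of_ne hjn (fun h => hb2 ⟨rfl, h⟩)
    set K : Finset ℕ := (Finset.Ico 2 n).erase j with hK
    set sf : ℕ → ℕ := fun k => if k + 1 = j then k + 2 else k + 1 with hsf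
    have hKmem : ∀ k, k ∈ K ↔ k ≠ j ∧ 2 ≤ k ∧ k < n := by
      intro k
      simp [hK, Finset.mem_erase, Finset.mem_Ico]
    set T0 : Finset (ℕ × ℕ × ℕ) := Q2Saux.fanT 1 K sf (0, 1, n) (j - 1, j, j + 1) with hT0
    have hmem : ∀ t, t ∈ T0 ↔ t = (0, 1, n) ∨ t = (j - 1, j, j + 1) ∨
        ∃ k ∈ K, (1, k, sf k) = t := fun t => Q2Saux.fanT_mem
    have hlt1 : ∀ t ∈ T0, t.1 < t.2.1 := by
      intro t ht
      rw [hmem] at ht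
      rcases ht with rfl | rfl | ⟨k, hk, rfl⟩
      · show (0 : ℕ) < 1; omega
      · show j - 1 < j; omega
      · show 1 < k; rw [hKmem] at hk; omega
    have hlt2 : ∀ t ∈ T0, t.2.1 < t.2.2 := by
      intro t ht
      rw [hmem] at ht
      rcases ht with rfl | rfl | ⟨k, hk, rfl⟩
      · show (1 : ℕ) < n; omega
      · show j < j + 1; omega
      · show k < sf k; simp only [hsf]; split_ifs <;> omega
    have hlen : ∀ t ∈ T0, t.2.2 ≤ n := by
      intro t ht
      rw [hmem] at ht
      rcases ht with rfl | rfl | ⟨k, hk, rfl⟩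
      · show n ≤ n; omega
      · show j + 1 ≤ n; omega
      · show sf k ≤ n; rw [hKmem] at hk; simp only [hsf]; split_ifs <;> omega
    have hG : ∀ t ∈ T0, Q2Saux.Good n 1 {j} t.1 t.2.1 ∧ Q2Saux.Good n 1 {j} t.2.1 t.2.2 ∧
        Q2Saux.Good n 1 {j} t.1 t.2.2 := by
      intro t ht
      rw [hmem] at ht
      rcases ht with rfl | rfl | ⟨k, hk, rfl⟩
      · refine ⟨?_, ?_, ?_⟩
        · show Q2Saux.Good n 1 {j} 0 1
          exact Or.inl rfl
        · show Q2Saux.Good n 1 {j} 1 n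
          exact Or.inr (Or.inr (Or.inl ⟨rfl, by
            simp only [Set.mem_singleton_iff]; omega⟩))
        · show Q2Saux.Good n 1 {j} 0 n
          exact Or.inr (Or.inl ⟨rfl, rfl⟩)
      · refine ⟨?_, ?_, ?_⟩
        · show Q2Saux.Good n 1 {j} (j - 1) j
          exact Or.inl (by omega)
        · show Q2Saux.Good n 1 {j} j (j + 1)
          exact Or.inl rfl
        · show Q2Saux.Good n 1 {j} (j - 1) (j + 1)
          exact Or.inr (Or.inr (Or.inr ⟨by
            simp only [Set.mem_singleton_iff]; omega, by omega⟩))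
      · rw [hKmem] at hk
        refine ⟨?_, ?_, ?_⟩
        · show Q2Saux.Good n 1 {j} 1 k
          exact Or.inr (Or.inr (Or.inl ⟨rfl, by
            simp only [Set.mem_singleton_iff]; omega⟩))
        · show Q2Saux.Good n 1 {j} k (sf k)
          simp only [hsf]
          split_ifs with h
          · exact Or.inr (Or.inr (Or.inr ⟨by simp only [Set.mem_singleton_iff]; omega, rfl⟩))
          · exact Or.inl rfl
        · show Q2Saux.Good n 1 {j} 1 (sf k)
          refine Or.inr (Or.inr (Or.inl ⟨rfl, ?_⟩))
          simp only [Set.mem_singleton_iff, hsf]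
          split_ifs <;> omega
    have hEc : ∀ x ∈ ({j} : Set ℕ), x ≠ 1 := by
      intro x hx; simp only [Set.mem_singleton_iff] at hx; omega
    have hEE : ∀ x ∈ ({j} : Set ℕ), ∀ y ∈ ({j} : Set ℕ), y ≠ x + 1 := by
      intro x hx y hy; simp only [Set.mem_singleton_iff] at hx hy; omega
    refine ⟨⟨T0, ?_, hlt1, hlt2, hlen, Q2Saux.mkNoncross 1 {j} T0 hlt2 hlen hEc hEE hG⟩,
      Or.inr (Or.inl ⟨rfl, ?_⟩), Or.inl ⟨by omega, hjn', ?_⟩⟩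
    · rw [hT0, Q2Saux.fanT_card (show (1 : ℕ) ≠ j by omega)
        (show (1 : ℕ) ∉ K by rw [hKmem]; omega) (show j ∉ K by rw [hKmem]; omega)]
      rw [hK, Finset.card_erase_of_mem (by simp [Finset.mem_Ico]; omega), Nat.card_Ico]
      omega
    · rw [hmem]; exact Or.inl rfl
    · rw [hmem]; exact Or.inr (Or.inl rfl)
  · by_cases hjn0 : j = n
    · -- Case C: `j = n`, hence `1 ≤ i ≤ n - 2`.  Ears `(i-1,i,i+1)` and `(0,n-1,n)`,
      -- fan from `0`.
      have hi1 : 1 ≤ i := by omega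
      have hin : i + 1 < n := by omega
      set K : Finset ℕ := (Finset.Ico 1 (n - 1)).erase i with hK
      set sf : ℕ → ℕ := fun k => if k + 1 = i then k + 2 else k + 1 with hsf
      have hKmem : ∀ k, k ∈ K ↔ k ≠ i ∧ 1 ≤ k ∧ k < n - 1 := by
        intro k
        simp [hK, Finset.mem_erase, Finset.mem_Ico]
      set T0 : Finset (ℕ × ℕ × ℕ) := Q2Saux.fanT 0 K sf (i - 1, i, i + 1) (0, n - 1, n)
        with hT0
      have hmem : ∀ t, t ∈ T0 ↔ t = (i - 1, i, i + 1) ∨ t = (0, n - 1, n) ∨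
          ∃ k ∈ K, (0, k, sf k) = t := fun t => Q2Saux.fanT_mem
      have hlt1 : ∀ t ∈ T0, t.1 < t.2.1 := by
        intro t ht
        rw [hmem] at ht
        rcases ht with rfl | rfl | ⟨k, hk, rfl⟩
        · show i - 1 < i; omega
        · show 0 < n - 1; omega
        · show 0 < k; rw [hKmem] at hk; omega
      have hlt2 : ∀ t ∈ T0, t.2.1 < t.2.2 := by
        intro t ht
        rw [hmem] at ht
        rcases ht with rfl | rfl | ⟨k, hk, rfl⟩
        · show i < i + 1; omega
        · show n - 1 < n; omega
        · show k < sf k; simp only [hsf]; split_ifs <;> omega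
      have hlen : ∀ t ∈ T0, t.2.2 ≤ n := by
        intro t ht
        rw [hmem] at ht
        rcases ht with rfl | rfl | ⟨k, hk, rfl⟩
        · show i + 1 ≤ n; omega
        · show n ≤ n; omega
        · show sf k ≤ n; rw [hKmem] at hk; simp only [hsf]; split_ifs <;> omega
      have hG : ∀ t ∈ T0, Q2Saux.Good n 0 {i} t.1 t.2.1 ∧ Q2Saux.Good n 0 {i} t.2.1 t.2.2 ∧
          Q2Saux.Good n 0 {i} t.1 t.2.2 := by
        intro t ht
        rw [hmem] at ht
        rcases ht with rfl | rfl | ⟨k, hk, rfl⟩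
        · refine ⟨?_, ?_, ?_⟩
          · show Q2Saux.Good n 0 {i} (i - 1) i
            exact Or.inl (by omega)
          · show Q2Saux.Good n 0 {i} i (i + 1)
            exact Or.inl rfl
          · show Q2Saux.Good n 0 {i} (i - 1) (i + 1)
            exact Or.inr (Or.inr (Or.inr ⟨by
              simp only [Set.mem_singleton_iff]; omega, by omega⟩))
        · refine ⟨?_, ?_, ?_⟩
          · show Q2Saux.Good n 0 {i} 0 (n - 1)
            exact Or.inr (Or.inr (Or.inl ⟨rfl, by
              simp only [Set.mem_singleton_iff]; omega⟩))
          · show Q2Saux.Good n 0 {i} (n - 1) n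
            exact Or.inl (by omega)
          · show Q2Saux.Good n 0 {i} 0 n
            exact Or.inr (Or.inl ⟨rfl, rfl⟩)
        · rw [hKmem] at hk
          refine ⟨?_, ?_, ?_⟩
          · show Q2Saux.Good n 0 {i} 0 k
            exact Or.inr (Or.inr (Or.inl ⟨rfl, by
              simp only [Set.mem_singleton_iff]; omega⟩))
          · show Q2Saux.Good n 0 {i} k (sf k)
            simp only [hsf]
            split_ifs with h
            · exact Or.inr (Or.inr (Or.inr ⟨by simp only [Set.mem_singleton_iff]; omega, rfl⟩))
            · exact Or.inl rfl
          · show Q2Saux.Good n 0 {i} 0 (sf k)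
            refine Or.inr (Or.inr (Or.inl ⟨rfl, ?_⟩))
            simp only [Set.mem_singleton_iff, hsf]
            split_ifs <;> omega
      have hEc : ∀ x ∈ ({i} : Set ℕ), x ≠ 0 := by
        intro x hx; simp only [Set.mem_singleton_iff] at hx; omega
      have hEE : ∀ x ∈ ({i} : Set ℕ), ∀ y ∈ ({i} : Set ℕ), y ≠ x + 1 := by
        intro x hx y hy; simp only [Set.mem_singleton_iff] at hx hy; omega
      refine ⟨⟨T0, ?_, hlt1, hlt2, hlen, Q2Saux.mkNoncross 0 {i} T0 hlt2 hlen hEc hEE hG⟩,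
        Or.inl ⟨by omega, by omega, ?_⟩, Or.inr (Or.inr ⟨hjn0, ?_⟩)⟩
      · rw [hT0, Q2Saux.fanT_card (show i ≠ n - 1 by omega)
          (show i ∉ K by rw [hKmem]; omega)
          (show n - 1 ∉ K by rw [hKmem]; omega)]
        rw [hK, Finset.card_erase_of_mem (by simp [Finset.mem_Ico]; omega), Nat.card_Ico]
        omega
      · rw [hmem]; exact Or.inl rfl
      · rw [hmem]; exact Or.inr (Or.inl rfl)
    · -- Case A: `1 ≤ i`, `i + 1 < j < n`.  Ears at `i` and `j`, fan from `0`.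
      have hi1 : 1 ≤ i := by omega
      have hjn' : j < n := lt_of_le_of_ne hjn hjn0
      set K : Finset ℕ := ((Finset.Ico 1 n).erase i).erase j with hK
      set sf : ℕ → ℕ := fun k => if k + 1 = i ∨ k + 1 = j then k + 2 else k + 1 with hsf
      have hKmem : ∀ k, k ∈ K ↔ k ≠ j ∧ k ≠ i ∧ 1 ≤ k ∧ k < n := by
        intro k
        simp [hK, Finset.mem_erase, Finset.mem_Ico, and_assoc]
      set T0 : Finset (ℕ × ℕ × ℕ) := Q2Saux.fanT 0 K sf (i - 1, i, i + 1) (j - 1, j, j + 1)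
        with hT0
      have hmem : ∀ t, t ∈ T0 ↔ t = (i - 1, i, i + 1) ∨ t = (j - 1, j, j + 1) ∨
          ∃ k ∈ K, (0, k, sf k) = t := fun t => Q2Saux.fanT_mem
      have hlt1 : ∀ t ∈ T0, t.1 < t.2.1 := by
        intro t ht
        rw [hmem] at ht
        rcases ht with rfl | rfl | ⟨k, hk, rfl⟩
        · show i - 1 < i; omega
        · show j - 1 < j; omega
        · show 0 < k; rw [hKmem] at hk; omega
      have hlt2 : ∀ t ∈ T0, t.2.1 < t.2.2 := by
        intro t ht
        rw [hmem] at ht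
        rcases ht with rfl | rfl | ⟨k, hk, rfl⟩
        · show i < i + 1; omega
        · show j < j + 1; omega
        · show k < sf k; simp only [hsf]; split_ifs <;> omega
      have hlen : ∀ t ∈ T0, t.2.2 ≤ n := by
        intro t ht
        rw [hmem] at ht
        rcases ht with rfl | rfl | ⟨k, hk, rfl⟩
        · show i + 1 ≤ n; omega
        · show j + 1 ≤ n; omega
        · show sf k ≤ n; rw [hKmem] at hk; simp only [hsf]; split_ifs <;> omega
      have hG : ∀ t ∈ T0, Q2Saux.Good n 0 {i, j} t.1 t.2.1 ∧
          Q2Saux.Good n 0 {i, j} t.2.1 t.2.2 ∧ Q2Saux.Good n 0 {i, j} t.1 t.2.2 := by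
        intro t ht
        rw [hmem] at ht
        rcases ht with rfl | rfl | ⟨k, hk, rfl⟩
        · refine ⟨?_, ?_, ?_⟩
          · show Q2Saux.Good n 0 {i, j} (i - 1) i
            exact Or.inl (by omega)
          · show Q2Saux.Good n 0 {i, j} i (i + 1)
            exact Or.inl rfl
          · show Q2Saux.Good n 0 {i, j} (i - 1) (i + 1)
            exact Or.inr (Or.inr (Or.inr ⟨by
              simp only [Set.mem_insert_iff, Set.mem_singleton_iff]; omega, by omega⟩))
        · refine ⟨?_, ?_, ?_⟩
          · show Q2Saux.Good n 0 {i, j} (j - 1) j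
            exact Or.inl (by omega)
          · show Q2Saux.Good n 0 {i, j} j (j + 1)
            exact Or.inl rfl
          · show Q2Saux.Good n 0 {i, j} (j - 1) (j + 1)
            exact Or.inr (Or.inr (Or.inr ⟨by
              simp only [Set.mem_insert_iff, Set.mem_singleton_iff]; omega, by omega⟩))
        · rw [hKmem] at hk
          refine ⟨?_, ?_, ?_⟩
          · show Q2Saux.Good n 0 {i, j} 0 k
            exact Or.inr (Or.inr (Or.inl ⟨rfl, by
              simp only [Set.mem_insert_iff, Set.mem_singleton_iff]; omega⟩))
          · show Q2Saux.Good n 0 {i, j} k (sf k)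
            simp only [hsf]
            split_ifs with h
            · refine Or.inr (Or.inr (Or.inr ⟨?_, rfl⟩))
              simp only [Set.mem_insert_iff, Set.mem_singleton_iff]; omega
            · exact Or.inl rfl
          · show Q2Saux.Good n 0 {i, j} 0 (sf k)
            refine Or.inr (Or.inr (Or.inl ⟨rfl, ?_⟩))
            simp only [Set.mem_insert_iff, Set.mem_singleton_iff, hsf]
            split_ifs <;> omega
      have hEc : ∀ x ∈ ({i, j} : Set ℕ), x ≠ 0 := by
        intro x hx
        simp only [Set.mem_insert_iff, Set.mem_singleton_iff] at hx; omega
      have hEE : ∀ x ∈ ({i, j} : Set ℕ), ∀ y ∈ ({i, j} : Set ℕ), y ≠ x + 1 := by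
        intro x hx y hy
        simp only [Set.mem_insert_iff, Set.mem_singleton_iff] at hx hy; omega
      refine ⟨⟨T0, ?_, hlt1, hlt2, hlen,
        Q2Saux.mkNoncross 0 {i, j} T0 hlt2 hlen hEc hEE hG⟩,
        Or.inl ⟨by omega, by omega, ?_⟩, Or.inl ⟨by omega, hjn', ?_⟩⟩
      · rw [hT0, Q2Saux.fanT_card (show i ≠ j by omega)
          (show i ∉ K by rw [hKmem]; omega) (show j ∉ K by rw [hKmem]; omega)]
        rw [hK, Finset.card_erase_of_mem ?_, Finset.card_erase_of_mem ?_, Nat.card_Ico]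
        · omega
        · simp [Finset.mem_Ico]; omega
        · simp [Finset.mem_erase, Finset.mem_Ico]; omega
      · rw [hmem]; exact Or.inl rfl
      · rw [hmem]; exact Or.inr (Or.inl rfl)
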